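/- arXiv:2308.11765 — 3 statements merged into one kernel-verified Lean document; each statement's English description precedes it below -/
import Mathlib

section
/- Let α ∈ [0, 1/2] and let s be defined by 1/s = 1 + α. Let X be a complex Banach space for which there exists a constant C > 0 such that for every ε > 0, every natural number n, and every n-dimensional subspace E of X there is a finite-rank bounded operator R on X with ‖R‖ ≤ C·n^α and ‖Rx − x‖ ≤ ε‖x‖ for all x ∈ E. Then X has the approximation property AP_{(s,1)} in the following sense: whenever (λ_k) is a sequence in the Lorentz space l_{(s,1)}, (x'_k) is a bounded sequence in X*, (x_k) is a bounded sequence in X, and Σ_k λ_k x'_k(x) x_k = 0 for every x ∈ X, then Σ_k λ_k ⟨U x_k, x'_k⟩ = 0 for every bounded linear operator U : X → X** (here ⟨U x_k, x'_k⟩ denotes the evaluation of the bidual element U x_k at the functional x'_k). -/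
open Filter
open scoped Topology

/-- The decreasing rearrangement of a scalar sequence, `0`-indexed:
`decRearrange a n = a*_{n+1} = inf_{|J| ≤ n} sup_{j ∉ J} ‖a j‖`. -/
noncomputable def decRearrange (a : ℕ → ℂ) (n : ℕ) : ℝ :=
  sInf {c : ℝ | ∃ J : Finset ℕ, J.card ≤ n ∧ ∀ j ∉ J, ‖a j‖ ≤ c}

/-- The `n`-th summand `(a*_{n+1})^v (n+1)^{v/u - 1}` in the Lorentz `l_{(u,v)}`-norm. -/
noncomputable def lorentzSummand (u v : ℝ) (a : ℕ → ℂ) (n : ℕ) : ℝ :=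
  decRearrange a n ^ v * ((n : ℝ) + 1) ^ (v / u - 1)

/-- Membership in the Lorentz sequence space `l_{(u,v)}` (`0 < v < ∞`). -/
def MemLorentz (u v : ℝ) (a : ℕ → ℂ) : Prop :=
  Tendsto (fun n => ‖a n‖) atTop (𝓝 0) ∧ Summable (lorentzSummand u v a)

/-! The generalized trace `τ(U) = ∑ λ_k ⟨U x_k, x'_k⟩` vanishes on every `U ∘ R` with `R` of finite
rank: writing `R = ∑_j φ_j ⊗ v_j`, it equals `∑_j ⟨U v_j, ∑_k λ_k φ_j(x_k) x'_k⟩`, and the inner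
functional is `φ_j` applied to the zero operator `∑_k λ_k x'_k ⊗ x_k`. Hence `τ(U) = τ(U ∘ (1 - R))`.
Let `J` index the `n` largest `|λ_k|` and let `R` approximate the identity on `span {x_k | k ∈ J}`
up to `ε`, with `‖R‖ ≤ C n^α`. The terms `k ∈ J` contribute `O(ε)`, the others at most
`(1 + C n^α) ∑_{m ≥ n} λ*_m ≤ (1 + C) ∑_{m ≥ n} λ*_m (m + 1)^α`, a tail of the `l_{(s,1)}`-norm
because `1/s - 1 = α`. Let `ε → 0`, then `n → ∞`. -/

section DecreasingRearrangement

variable {a : ℕ → ℂ}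

lemma le_decRearrange (ha : Tendsto (fun n => ‖a n‖) atTop (𝓝 0)) {G : Finset ℕ} {m : ℕ}
    {v : ℝ} (hcard : m < G.card) (hv : ∀ j ∈ G, v ≤ ‖a j‖) : v ≤ decRearrange a m := by
  obtain ⟨c₀, hc₀⟩ := ha.bddAbove_range
  refine le_csInf ⟨c₀, ∅, by simp, fun j _ => hc₀ ⟨j, rfl⟩⟩ fun c ⟨J, hJcard, hJ⟩ => ?_
  obtain ⟨j, hj⟩ : (G \ J).Nonempty := by
    rw [← Finset.card_pos]
    have := Finset.le_card_sdiff J G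
    omega
  rw [Finset.mem_sdiff] at hj
  exact (hv j hj.1).trans (hJ j hj.2)

lemma decRearrange_nonneg (ha : Tendsto (fun n => ‖a n‖) atTop (𝓝 0)) (m : ℕ) :
    0 ≤ decRearrange a m :=
  le_decRearrange ha (G := Finset.range (m + 1)) (by simp) fun _ _ => norm_nonneg _

lemma exists_notMem_forall_norm_le (ha : Tendsto (fun n => ‖a n‖) atTop (𝓝 0))
    (J : Finset ℕ) : ∃ k ∉ J, ∀ i ∉ J, ‖a i‖ ≤ ‖a k‖ := by
  by_cases hzero : ∀ i ∉ J, a i = 0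
  · obtain ⟨k, hk⟩ := Infinite.exists_notMem_finset J
    exact ⟨k, hk, fun i hi => by simp [hzero i hi]⟩
  push Not at hzero
  obtain ⟨k₀, hk₀J, hk₀⟩ := hzero
  have hsmall : ∀ᶠ i in cofinite, ‖a i‖ < ‖a k₀‖ :=
    Nat.cofinite_eq_atTop ▸ ha.eventually (gt_mem_nhds (norm_pos_iff.2 hk₀))
  have hfin : {i | i ∉ J ∧ ‖a k₀‖ ≤ ‖a i‖}.Finite :=
    (Filter.eventually_cofinite.1 hsmall).subset fun i hi => not_lt.2 hi.2
  obtain ⟨k, ⟨hkJ, hk⟩, hmax⟩ := Set.exists_max_image _ (‖a ·‖) hfin ⟨k₀, hk₀J, le_rfl⟩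
  refine ⟨k, hkJ, fun i hi => ?_⟩
  rcases le_total ‖a k₀‖ ‖a i‖ with h | h
  · exact hmax i ⟨hi, h⟩
  · exact h.trans hk

lemma exists_card_eq_forall_norm_le (ha : Tendsto (fun n => ‖a n‖) atTop (𝓝 0)) (n : ℕ) :
    ∃ J : Finset ℕ, J.card = n ∧ ∀ i ∉ J, ∀ j ∈ J, ‖a i‖ ≤ ‖a j‖ := by
  induction n with
  | zero => exact ⟨∅, rfl, by simp⟩
  | succ n ih =>
    obtain ⟨J, hcard, htop⟩ := ih
    obtain ⟨k, hkJ, hk⟩ := exists_notMem_forall_norm_le ha J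
    refine ⟨insert k J, by rw [Finset.card_insert_of_notMem hkJ, hcard], fun i hi j hj => ?_⟩
    rw [Finset.mem_insert, not_or] at hi
    rcases Finset.mem_insert.1 hj with rfl | hj
    · exact hk i hi.2
    · exact htop i hi.2 j hj

lemma sum_norm_le_sum_Ico_decRearrange (ha : Tendsto (fun n => ‖a n‖) atTop (𝓝 0)) {n : ℕ}
    {J : Finset ℕ} (hcard : J.card = n) (htop : ∀ i ∉ J, ∀ j ∈ J, ‖a i‖ ≤ ‖a j‖)
    (F : Finset ℕ) (hdisj : Disjoint F J) :
    ∑ k ∈ F, ‖a k‖ ≤ ∑ i ∈ Finset.Ico n (n + F.card), decRearrange a i := by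
  induction F using Finset.induction_on_min_value (fun j => ‖a j‖) with
  | empty => simp
  | insert k F hkF hmin ih =>
    have hdisj' : Disjoint F J := hdisj.mono_left (Finset.subset_insert k F)
    -- `J ∪ insert k F` has `n + #F + 1` elements, all at least `‖a k‖`
    have hk : ‖a k‖ ≤ decRearrange a (n + F.card) := by
      refine le_decRearrange ha (G := J ∪ insert k F) ?_ fun j hj => ?_
      · rw [Finset.card_union_of_disjoint hdisj.symm, hcard, Finset.card_insert_of_notMem hkF]
        omega
      · rcases Finset.mem_union.1 hj with hj | hj
        · exact htop k (Finset.disjoint_left.1 hdisj (Finset.mem_insert_self k F)) j hj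
        · rcases Finset.mem_insert.1 hj with rfl | hj
          · exact le_rfl
          · exact hmin j hj
    rw [Finset.sum_insert hkF, Finset.card_insert_of_notMem hkF, ← add_assoc,
      Finset.sum_Ico_succ_top (by omega), add_comm]
    exact add_le_add (ih hdisj') hk

lemma sum_norm_le_tsum_decRearrange (ha : Tendsto (fun n => ‖a n‖) atTop (𝓝 0))
    (hsum : Summable (decRearrange a)) {n : ℕ} {J : Finset ℕ} (hcard : J.card = n)
    (htop : ∀ i ∉ J, ∀ j ∈ J, ‖a i‖ ≤ ‖a j‖) (F : Finset ℕ) (hdisj : Disjoint F J) :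
    ∑ k ∈ F, ‖a k‖ ≤ ∑' m, decRearrange a (m + n) := by
  refine (sum_norm_le_sum_Ico_decRearrange ha hcard htop F hdisj).trans ?_
  rw [Finset.sum_Ico_eq_sum_range, add_tsub_cancel_left]
  simp_rw [add_comm n]
  exact ((summable_nat_add_iff n).2 hsum).sum_le_tsum _ fun m _ => decRearrange_nonneg ha _

lemma summable_norm_of_summable_decRearrange (ha : Tendsto (fun n => ‖a n‖) atTop (𝓝 0))
    (hsum : Summable (decRearrange a)) : Summable (‖a ·‖) :=
  summable_of_sum_le (fun _ => norm_nonneg _) fun F =>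
    sum_norm_le_tsum_decRearrange ha hsum (J := ∅) rfl (by simp) F (Finset.disjoint_empty_right F)

lemma tsum_indicator_compl_le_tsum_decRearrange (ha : Tendsto (fun n => ‖a n‖) atTop (𝓝 0))
    (hsum : Summable (decRearrange a)) {n : ℕ} {J : Finset ℕ} (hcard : J.card = n)
    (htop : ∀ i ∉ J, ∀ j ∈ J, ‖a i‖ ≤ ‖a j‖) :
    ∑' k, (↑J : Set ℕ)ᶜ.indicator (‖a ·‖) k ≤ ∑' m, decRearrange a (m + n) := by
  refine tsum_le_of_sum_le' (tsum_nonneg fun m => decRearrange_nonneg ha _) fun F => ?_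
  simp only [Set.indicator_apply, Set.mem_compl_iff, Finset.mem_coe, ← Finset.sum_filter]
  exact sum_norm_le_tsum_decRearrange ha hsum hcard htop _
    (Finset.disjoint_left.2 fun k hk => (Finset.mem_filter.1 hk).2)

end DecreasingRearrangement

lemma lorentzSummand_one_eq {s α : ℝ} (hs : 1 / s = 1 + α) (a : ℕ → ℂ) (m : ℕ) :
    lorentzSummand s 1 a m = decRearrange a m * ((m : ℝ) + 1) ^ α := by
  rw [lorentzSummand, Real.rpow_one, hs, add_sub_cancel_left]

section WeightedTail

variable {f : ℕ → ℝ} {α : ℝ}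

lemma summable_of_summable_mul_rpow (hf : ∀ m, 0 ≤ f m) (hα : 0 ≤ α)
    (h : Summable fun m => f m * ((m : ℝ) + 1) ^ α) : Summable f :=
  h.of_nonneg_of_le hf fun m =>
    le_mul_of_one_le_right (hf m) (Real.one_le_rpow (le_add_of_nonneg_left m.cast_nonneg) hα)

lemma tendsto_rpow_mul_tsum_nat_add (hf : ∀ m, 0 ≤ f m) (hα : 0 ≤ α)
    (h : Summable fun m => f m * ((m : ℝ) + 1) ^ α) :
    Tendsto (fun n : ℕ => (n : ℝ) ^ α * ∑' m, f (m + n)) atTop (𝓝 0) := by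
  refine squeeze_zero (fun n => mul_nonneg (by positivity) (tsum_nonneg fun m => hf _))
    (fun n => ?_) (tendsto_sum_nat_add fun m => f m * ((m : ℝ) + 1) ^ α)
  rw [← tsum_mul_left]
  refine Summable.tsum_le_tsum (fun m => ?_)
    (((summable_nat_add_iff n).2 (summable_of_summable_mul_rpow hf hα h)).mul_left _)
    ((summable_nat_add_iff n).2 h)
  rw [mul_comm]
  gcongr
  · exact hf _
  · push_cast
    linarith

end WeightedTail

section Trace

variable {𝕜 X : Type*} [NontriviallyNormedField 𝕜] [NormedAddCommGroup X] [NormedSpace 𝕜 X]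

lemma ContinuousLinearMap.exists_sum_smul_of_finiteDimensional_range [CompleteSpace 𝕜]
    {Y : Type*} [NormedAddCommGroup Y] [NormedSpace 𝕜 Y] (R : X →L[𝕜] Y)
    [FiniteDimensional 𝕜 (LinearMap.range (R : X →ₗ[𝕜] Y))] :
    ∃ (n : ℕ) (φ : Fin n → X →L[𝕜] 𝕜) (v : Fin n → Y), ∀ y, R y = ∑ j, φ j y • v j := by
  let b := Module.finBasis 𝕜 (LinearMap.range (R : X →ₗ[𝕜] Y))
  let Rr : X →L[𝕜] LinearMap.range (R : X →ₗ[𝕜] Y) :=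
    R.codRestrict _ fun y => LinearMap.mem_range_self (R : X →ₗ[𝕜] Y) y
  refine ⟨_, fun j => LinearMap.toContinuousLinearMap (b.coord j) ∘L Rr, fun j => b j,
    fun y => ?_⟩
  simp only [ContinuousLinearMap.coe_comp, Function.comp_apply,
    LinearMap.coe_toContinuousLinearMap', Module.Basis.coord_apply]
  conv_lhs => rw [show R y = (Rr y : Y) from rfl, ← b.sum_repr (Rr y)]
  simp only [Submodule.coe_sum, Submodule.coe_smul]

variable {lam : ℕ → 𝕜} {x' : ℕ → X →L[𝕜] 𝕜} {x : ℕ → X} {Mx M' : ℝ}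

lemma summable_smul_of_norm_le {E : Type*} [SeminormedAddCommGroup E] [NormedSpace 𝕜 E]
    [CompleteSpace E] (hlam : Summable (‖lam ·‖)) {f : ℕ → E} {M : ℝ} (hf : ∀ k, ‖f k‖ ≤ M) :
    Summable fun k => lam k • f k :=
  (hlam.mul_right M).of_norm_bounded fun k =>
    (norm_smul _ _).trans_le (mul_le_mul_of_nonneg_left (hf k) (norm_nonneg _))

lemma summable_smul_apply_smul [CompleteSpace 𝕜] (hlam : Summable (‖lam ·‖))
    (hx : ∀ k, ‖x k‖ ≤ Mx) (hx' : ∀ k, ‖x' k‖ ≤ M') (φ : X →L[𝕜] 𝕜) :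
    Summable fun k => lam k • φ (x k) • x' k := by
  refine summable_smul_of_norm_le hlam (M := ‖φ‖ * Mx * M') fun k => ?_
  rw [norm_smul]
  have hMx : 0 ≤ Mx := (norm_nonneg _).trans (hx 0)
  exact mul_le_mul (φ.le_of_opNorm_le_of_le le_rfl (hx k)) (hx' k) (norm_nonneg _) (by positivity)

lemma tsum_smul_apply_smul_eq_zero [CompleteSpace 𝕜] [CompleteSpace X]
    (hlam : Summable (‖lam ·‖)) (hx : ∀ k, ‖x k‖ ≤ Mx) (hx' : ∀ k, ‖x' k‖ ≤ M')
    (hzero : ∀ y : X, ∑' k, (lam k * x' k y) • x k = 0) (φ : X →L[𝕜] 𝕜) :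
    ∑' k, lam k • φ (x k) • x' k = 0 := by
  ext y
  have hsum : Summable fun k => lam k • x' k y • x k := by
    refine summable_smul_of_norm_le hlam (M := M' * ‖y‖ * Mx) fun k => ?_
    rw [norm_smul]
    have hM' : 0 ≤ M' := (norm_nonneg _).trans (hx' 0)
    exact mul_le_mul ((x' k).le_of_opNorm_le (hx' k) y) (hx k) (norm_nonneg _) (by positivity)
  have hφ := congrArg φ (hzero y)
  simp only [mul_smul, φ.map_tsum hsum, map_smul, map_zero, smul_eq_mul] at hφ
  have happly := (ContinuousLinearMap.apply 𝕜 𝕜 y).map_tsum (summable_smul_apply_smul hlam hx hx' φ)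
  simp only [ContinuousLinearMap.apply_apply] at happly
  simpa [happly, mul_comm] using hφ

lemma tsum_mul_apply_comp_eq_zero [CompleteSpace 𝕜] [CompleteSpace X]
    (hlam : Summable (‖lam ·‖)) (hx : ∀ k, ‖x k‖ ≤ Mx) (hx' : ∀ k, ‖x' k‖ ≤ M')
    (hzero : ∀ y : X, ∑' k, (lam k * x' k y) • x k = 0)
    (U : X →L[𝕜] (X →L[𝕜] 𝕜) →L[𝕜] 𝕜) (R : X →L[𝕜] X)
    [FiniteDimensional 𝕜 (LinearMap.range (R : X →ₗ[𝕜] X))] :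
    ∑' k, lam k * U (R (x k)) (x' k) = 0 := by
  obtain ⟨n, φ, v, hR⟩ := R.exists_sum_smul_of_finiteDimensional_range
  have hsum j := summable_smul_apply_smul hlam hx hx' (φ j)
  calc ∑' k, lam k * U (R (x k)) (x' k)
      = ∑' k, ∑ j, U (v j) (lam k • φ j (x k) • x' k) := by
        simp [hR, Finset.mul_sum]
    _ = ∑ j, U (v j) (∑' k, lam k • φ j (x k) • x' k) := by
        rw [Summable.tsum_finsetSum fun j _ => (hsum j).mapL _]
        simp_rw [(U (v _)).map_tsum (hsum _)]
    _ = 0 := by simp [tsum_smul_apply_smul_eq_zero hlam hx hx' hzero]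

lemma ContinuousLinearMap.norm_sub_apply_le (R : X →L[𝕜] X) (v : X) :
    ‖v - R v‖ ≤ (1 + ‖R‖) * ‖v‖ := by
  linarith [norm_sub_le v (R v), R.le_opNorm v]

variable {U : X →L[𝕜] (X →L[𝕜] 𝕜) →L[𝕜] 𝕜} {c : ℝ}

lemma summable_mul_apply [CompleteSpace 𝕜] (hlam : Summable (‖lam ·‖))
    (hx' : ∀ k, ‖x' k‖ ≤ M') (hc : 0 ≤ c) (hU : ∀ y f, ‖U y f‖ ≤ c * ‖y‖ * ‖f‖)
    {f : ℕ → X} {M : ℝ} (hf : ∀ k, ‖f k‖ ≤ M) :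
    Summable fun k => lam k * U (f k) (x' k) :=
  summable_smul_of_norm_le hlam (M := c * M * M') fun k =>
    (hU _ _).trans (mul_le_mul (by gcongr; exact hf k) (hx' k) (norm_nonneg _)
      (mul_nonneg hc ((norm_nonneg _).trans (hf 0))))

lemma norm_tsum_mul_apply_le [CompleteSpace 𝕜] [CompleteSpace X]
    (hlam : Summable (‖lam ·‖)) (hx : ∀ k, ‖x k‖ ≤ Mx) (hx' : ∀ k, ‖x' k‖ ≤ M')
    (hzero : ∀ y : X, ∑' k, (lam k * x' k y) • x k = 0)
    (hc : 0 ≤ c) (hU : ∀ y f, ‖U y f‖ ≤ c * ‖y‖ * ‖f‖) (R : X →L[𝕜] X)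
    [FiniteDimensional 𝕜 (LinearMap.range (R : X →ₗ[𝕜] X))] :
    ‖∑' k, lam k * U (x k) (x' k)‖ ≤ c * M' * ∑' k, ‖lam k‖ * ‖x k - R (x k)‖ := by
  have hMx : 0 ≤ Mx := (norm_nonneg _).trans (hx 0)
  have hM' : 0 ≤ M' := (norm_nonneg _).trans (hx' 0)
  have hxR k : ‖x k - R (x k)‖ ≤ (1 + ‖R‖) * Mx :=
    (R.norm_sub_apply_le _).trans (by gcongr; exact hx k)
  -- the trace against the finite-rank operator `U ∘ R` vanishes
  have hsplit : ∑' k, lam k * U (x k) (x' k) = ∑' k, lam k * U (x k - R (x k)) (x' k) := by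
    simp only [map_sub, sub_apply, mul_sub]
    rw [Summable.tsum_sub (summable_mul_apply hlam hx' hc hU hx)
      (summable_mul_apply hlam hx' hc hU fun k => R.le_of_opNorm_le_of_le le_rfl (hx k)),
      tsum_mul_apply_comp_eq_zero hlam hx hx' hzero U R, sub_zero]
  have hsum : Summable fun k => ‖lam k‖ * ‖x k - R (x k)‖ :=
    (hlam.mul_right ((1 + ‖R‖) * Mx)).of_nonneg_of_le (fun _ => by positivity)
      fun k => by gcongr; exact hxR k
  rw [hsplit, ← tsum_mul_left]
  refine tsum_of_norm_bounded (hsum.mul_left _).hasSum fun k => ?_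
  rw [norm_mul]
  calc ‖lam k‖ * ‖U (x k - R (x k)) (x' k)‖ ≤ ‖lam k‖ * (c * ‖x k - R (x k)‖ * M') := by
        gcongr
        exact (hU _ _).trans (by gcongr; exact hx' k)
    _ = c * M' * (‖lam k‖ * ‖x k - R (x k)‖) := by ring

lemma tsum_norm_mul_norm_sub_le (hlam : Summable (‖lam ·‖)) (hx : ∀ k, ‖x k‖ ≤ Mx)
    (J : Finset ℕ) {ε : ℝ} (hε : 0 ≤ ε) (R : X →L[𝕜] X)
    (hR : ∀ k ∈ J, ‖R (x k) - x k‖ ≤ ε * ‖x k‖) :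
    ∑' k, ‖lam k‖ * ‖x k - R (x k)‖ ≤
      Mx * (ε * ∑' k, ‖lam k‖ + (1 + ‖R‖) * ∑' k, (↑J : Set ℕ)ᶜ.indicator (‖lam ·‖) k) := by
  have hMx : 0 ≤ Mx := (norm_nonneg _).trans (hx 0)
  set I := (↑J : Set ℕ)ᶜ.indicator (‖lam ·‖)
  have hpt k : ‖lam k‖ * ‖x k - R (x k)‖ ≤ Mx * (ε * ‖lam k‖ + (1 + ‖R‖) * I k) := by
    by_cases hk : k ∈ J
    · have hxk : ‖x k - R (x k)‖ ≤ ε * Mx := by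
        rw [norm_sub_rev]
        exact (hR k hk).trans (by gcongr; exact hx k)
      have hIk : I k = 0 := Set.indicator_of_notMem (by simpa using hk) _
      rw [hIk]
      nlinarith [norm_nonneg (lam k)]
    · have hxk : ‖x k - R (x k)‖ ≤ (1 + ‖R‖) * Mx :=
        (R.norm_sub_apply_le _).trans (by gcongr; exact hx k)
      have hIk : I k = ‖lam k‖ := Set.indicator_of_mem (by simpa using hk) _
      rw [hIk]
      nlinarith [norm_nonneg (lam k), mul_nonneg hε (norm_nonneg (lam k))]
  have hsumI : Summable I := hlam.indicator _
  have hsum : Summable fun k => Mx * (ε * ‖lam k‖ + (1 + ‖R‖) * I k) :=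
    ((hlam.mul_left ε).add (hsumI.mul_left _)).mul_left Mx
  calc ∑' k, ‖lam k‖ * ‖x k - R (x k)‖ ≤ ∑' k, Mx * (ε * ‖lam k‖ + (1 + ‖R‖) * I k) :=
        Summable.tsum_le_tsum hpt (hsum.of_nonneg_of_le (fun _ => by positivity) hpt) hsum
    _ = Mx * (ε * ∑' k, ‖lam k‖ + (1 + ‖R‖) * ∑' k, I k) := by
        rw [tsum_mul_left, (hlam.mul_left ε).tsum_add (hsumI.mul_left _), tsum_mul_left,
          tsum_mul_left]

lemma norm_tsum_mul_apply_le_of_forall_approx [CompleteSpace 𝕜] [CompleteSpace X]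
    (hlam : Summable (‖lam ·‖)) (hx : ∀ k, ‖x k‖ ≤ Mx) (hx' : ∀ k, ‖x' k‖ ≤ M')
    (hzero : ∀ y : X, ∑' k, (lam k * x' k y) • x k = 0)
    (hc : 0 ≤ c) (hU : ∀ y f, ‖U y f‖ ≤ c * ‖y‖ * ‖f‖) (J : Finset ℕ) {B : ℝ}
    (happrox : ∀ ε > (0 : ℝ), ∃ R : X →L[𝕜] X,
      FiniteDimensional 𝕜 (LinearMap.range (R : X →ₗ[𝕜] X)) ∧ ‖R‖ ≤ B ∧
        ∀ k ∈ J, ‖R (x k) - x k‖ ≤ ε * ‖x k‖) :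
    ‖∑' k, lam k * U (x k) (x' k)‖ ≤
      c * M' * Mx * ((1 + B) * ∑' k, (↑J : Set ℕ)ᶜ.indicator (‖lam ·‖) k) := by
  have hMx : 0 ≤ Mx := (norm_nonneg _).trans (hx 0)
  have hM' : 0 ≤ M' := (norm_nonneg _).trans (hx' 0)
  set I := ∑' k, (↑J : Set ℕ)ᶜ.indicator (‖lam ·‖) k
  have hI : 0 ≤ I := tsum_nonneg fun k => Set.indicator_nonneg (fun _ _ => norm_nonneg _) k
  have hbound : ∀ ε > (0 : ℝ), ‖∑' k, lam k * U (x k) (x' k)‖ ≤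
      c * M' * Mx * ((1 + B) * I) + ε * (c * M' * Mx * ∑' k, ‖lam k‖) := by
    intro ε hε
    obtain ⟨R, hRfin, hRB, hR⟩ := happrox ε hε
    calc ‖∑' k, lam k * U (x k) (x' k)‖ ≤ c * M' * ∑' k, ‖lam k‖ * ‖x k - R (x k)‖ :=
          norm_tsum_mul_apply_le hlam hx hx' hzero hc hU R
      _ ≤ c * M' * (Mx * (ε * ∑' k, ‖lam k‖ + (1 + ‖R‖) * I)) := by
          gcongr
          exact tsum_norm_mul_norm_sub_le hlam hx J hε.le R hR
      _ ≤ c * M' * (Mx * (ε * ∑' k, ‖lam k‖ + (1 + B) * I)) := by gcongr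
      _ = c * M' * Mx * ((1 + B) * I) + ε * (c * M' * Mx * ∑' k, ‖lam k‖) := by ring
  refine ge_of_tendsto (x := 𝓝[>] 0) ?_ (eventually_nhdsWithin_of_forall hbound)
  exact tendsto_nhdsWithin_of_tendsto_nhds (Continuous.tendsto' (by fun_prop) _ _ (by simp))

end Trace

theorem ap_s1_of_uniform_approximation_general (α s : ℝ) (hα0 : 0 ≤ α)
    (hs : 1 / s = 1 + α)
    (X : Type*) [NormedAddCommGroup X] [NormedSpace ℂ X] [CompleteSpace X]
    (C : ℝ) (hC : 0 < C)
    (happrox : ∀ ε > (0 : ℝ), ∀ n : ℕ, ∀ E : Submodule ℂ X, FiniteDimensional ℂ E →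
      Module.finrank ℂ E = n →
      ∃ R : X →L[ℂ] X, FiniteDimensional ℂ (LinearMap.range (R : X →ₗ[ℂ] X)) ∧
        ‖R‖ ≤ C * (n : ℝ) ^ α ∧ ∀ x ∈ E, ‖R x - x‖ ≤ ε * ‖x‖)
    (lam : ℕ → ℂ) (hlam : MemLorentz s 1 lam)
    (x' : ℕ → X →L[ℂ] ℂ) (hx' : ∃ M, ∀ k, ‖x' k‖ ≤ M)
    (x : ℕ → X) (hx : ∃ M, ∀ k, ‖x k‖ ≤ M)
    (hzero : ∀ y : X, ∑' k, (lam k * (x' k) y) • x k = 0)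
    (U : X →L[ℂ] ((X →L[ℂ] ℂ) →L[ℂ] ℂ)) :
    ∑' k, lam k * (U (x k)) (x' k) = 0 := by
  obtain ⟨hlam0, hL⟩ := hlam
  obtain ⟨M', hM'⟩ := hx'
  obtain ⟨Mx, hMx⟩ := hx
  obtain ⟨c, hc, hU⟩ := U.isBoundedBilinearMap.bound
  have hL' : Summable fun m => decRearrange lam m * ((m : ℝ) + 1) ^ α :=
    funext (lorentzSummand_one_eq hs lam) ▸ hL
  have hdec0 := decRearrange_nonneg hlam0
  have hdec := summable_of_summable_mul_rpow hdec0 hα0 hL'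
  have hbound (n : ℕ) : ‖∑' k, lam k * U (x k) (x' k)‖ ≤
      c * M' * Mx * ((1 + C * (n : ℝ) ^ α) * ∑' m, decRearrange lam (m + n)) := by
    classical
    obtain ⟨J, hJcard, hJtop⟩ := exists_card_eq_forall_norm_le hlam0 n
    refine (norm_tsum_mul_apply_le_of_forall_approx (summable_norm_of_summable_decRearrange
      hlam0 hdec) hMx hM' hzero hc.le hU J (B := C * (n : ℝ) ^ α) fun ε hε => ?_).trans ?_
    · obtain ⟨R, hRfin, hRnorm, hR⟩ := happrox ε hε _ (Submodule.span ℂ (J.image x : Set X))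
        (FiniteDimensional.span_finset ℂ _) rfl
      refine ⟨R, hRfin, hRnorm.trans ?_, fun k hk => hR _ (Submodule.subset_span ?_)⟩
      · gcongr
        exact_mod_cast (finrank_span_finset_le_card _).trans (hJcard ▸ Finset.card_image_le)
      · simpa using ⟨k, hk, rfl⟩
    · have hMx0 : 0 ≤ Mx := (norm_nonneg _).trans (hMx 0)
      have hM'0 : 0 ≤ M' := (norm_nonneg _).trans (hM' 0)
      have hC0 : 0 ≤ C * (n : ℝ) ^ α := by positivity
      gcongr _ * (_ * ?_)
      exact tsum_indicator_compl_le_tsum_decRearrange hlam0 hdec hJcard hJtop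
  have hlim : Tendsto (fun n : ℕ =>
      c * M' * Mx * ((1 + C * (n : ℝ) ^ α) * ∑' m, decRearrange lam (m + n))) atTop (𝓝 0) := by
    have := (tendsto_sum_nat_add (decRearrange lam)).add
      ((tendsto_rpow_mul_tsum_nat_add hdec0 hα0 hL').const_mul C)
    simpa [add_mul, mul_assoc] using this.const_mul (c * M' * Mx)
  exact norm_le_zero_iff.1 (ge_of_tendsto' hlim hbound)

/-- if `0 ≤ α ≤ 1/2`, `1/s = 1 + α` and the complex Banach space `X`
admits, for every `ε > 0` and every `n`-dimensional subspace `E`, a finite-rank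
operator `R` with `‖R‖ ≤ C n^α` and `‖Rx - x‖ ≤ ε‖x‖` on `E`, then `X` has
`AP_{(s,1)}`: any tensor element `∑ λ_k x'_k ⊗ x_k` (with `(λ_k) ∈ l_{(s,1)}`,
`(x'_k)` bounded in `X*`, `(x_k)` bounded in `X`) inducing the zero operator
has vanishing generalized trace against every `U : X → X**`. -/
theorem ap_s1_of_uniform_approximation (α s : ℝ) (hα0 : 0 ≤ α) (hα1 : α ≤ 1 / 2)
    (hs : 1 / s = 1 + α)
    (X : Type*) [NormedAddCommGroup X] [NormedSpace ℂ X] [CompleteSpace X]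
    (C : ℝ) (hC : 0 < C)
    (happrox : ∀ ε > (0 : ℝ), ∀ n : ℕ, ∀ E : Submodule ℂ X, FiniteDimensional ℂ E →
      Module.finrank ℂ E = n →
      ∃ R : X →L[ℂ] X, FiniteDimensional ℂ (LinearMap.range (R : X →ₗ[ℂ] X)) ∧
        ‖R‖ ≤ C * (n : ℝ) ^ α ∧ ∀ x ∈ E, ‖R x - x‖ ≤ ε * ‖x‖)
    (lam : ℕ → ℂ) (hlam : MemLorentz s 1 lam)
    (x' : ℕ → X →L[ℂ] ℂ) (hx' : ∃ M, ∀ k, ‖x' k‖ ≤ M)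
    (x : ℕ → X) (hx : ∃ M, ∀ k, ‖x k‖ ≤ M)
    (hzero : ∀ y : X, ∑' k, (lam k * (x' k) y) • x k = 0)
    (U : X →L[ℂ] ((X →L[ℂ] ℂ) →L[ℂ] ℂ)) :
    ∑' k, lam k * (U (x k)) (x' k) = 0 :=
  ap_s1_of_uniform_approximation_general α s hα0 hs X C hC happrox lam hlam x' hx' x hx hzero U
end

section
/- Let 0 < r ≤ 1, 1 ≤ p ≤ 2, 1/r = 1/2 + 1/p, and let p' be the conjugate exponent of p. Let X be a Banach space and let T : X → X admit a representation T x = Σ_k λ_k x'_k(x) x_k with Σ_k |λ_k|^r < ∞, (x'_k) bounded in X*, and (x_k) weakly p'-summable in X (i.e. T belongs to the ideal N_{[r,p']}(X) = N_{r,∞,p'}(X)). Then T admits a factorization T = B ∘ A, where A : X → l_p is an r-nuclear operator (i.e. A x = Σ_k κ_k y'_k(x) z_k with Σ_k |κ_k|^r < ∞, (y'_k) bounded in X*, (z_k) bounded in l_p) and B : l_p → X is a bounded linear operator. -/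
open Filter
open scoped ENNReal Topology

section ops
variable {X : Type*} [NormedAddCommGroup X] [NormedSpace ℂ X]

/-- `(x_k)` is weakly `q`-summable (`q = ⊤` meaning bounded; `q < ∞` meaning
`sup_{‖f‖≤1} ∑_k |f(x_k)|^q < ∞`). -/
def WeaklyQSummable (q : ℝ≥0∞) (x : ℕ → X) : Prop :=
  (q = ⊤ → ∃ M, ∀ k, ‖x k‖ ≤ M) ∧
  (q ≠ ⊤ → ∃ C, ∀ f : X →L[ℂ] ℂ, ‖f‖ ≤ 1 →
    ∀ F : Finset ℕ, ∑ k ∈ F, ‖f (x k)‖ ^ q.toReal ≤ C)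

/-- An operator `A : X → Y` is `r`-nuclear: `A v = ∑_k κ_k y'_k(v) z_k` with
`∑_k ‖κ_k‖^r < ∞`, `(y'_k)` bounded in `X*` and `(z_k)` bounded in `Y`. -/
def IsRNuclear (r : ℝ) {Y : Type*} [NormedAddCommGroup Y] [NormedSpace ℂ Y]
    (A : X →L[ℂ] Y) : Prop :=
  ∃ (κ : ℕ → ℂ) (y' : ℕ → X →L[ℂ] ℂ) (z : ℕ → Y),
    Summable (fun k => ‖κ k‖ ^ r) ∧ (∃ M, ∀ k, ‖y' k‖ ≤ M) ∧
    (∃ M, ∀ k, ‖z k‖ ≤ M) ∧ ∀ v, A v = ∑' k, (κ k * (y' k) v) • z k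

end ops

/-! The factorization is the obvious one: `A v = (λ_k x'_k(v))_k` and `B c = ∑ c_k x_k`.
Since `r ≤ 1 ≤ p`, `(λ_k)` lies in `ℓ^p`, so `A` maps into `ℓ^p`, and `A = ∑ λ_k x'_k ⊗ e_k` is
`r`-nuclear because the unit vectors `e_k` are bounded. Testing `∑_{k ∈ F} c_k x_k` against a norming
functional and applying Hölder's inequality with the weak `p'`-summability of `(x_k)` bounds it by
`K ‖c‖_p` uniformly in the finite set `F`; the series defining `B` is therefore Cauchy, and `B` is
bounded. -/

section
variable {X : Type*} [NormedAddCommGroup X] [NormedSpace ℂ X]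

theorem norm_sum_smul_le_mul_sum_norm {M : ℝ} {x : ℕ → X} (hM : ∀ k, ‖x k‖ ≤ M)
    (c : ℕ → ℂ) (F : Finset ℕ) : ‖∑ k ∈ F, c k • x k‖ ≤ M * ∑ k ∈ F, ‖c k‖ := by
  rw [Finset.mul_sum]
  refine (norm_sum_le _ _).trans (Finset.sum_le_sum fun k _ => ?_)
  rw [norm_smul, mul_comm]
  exact mul_le_mul_of_nonneg_right (hM k) (norm_nonneg _)

theorem norm_sum_smul_le_of_holderConjugate {p q C : ℝ} (hpq : p.HolderConjugate q)
    {x : ℕ → X} (hC : ∀ f : X →L[ℂ] ℂ, ‖f‖ ≤ 1 → ∀ F : Finset ℕ, ∑ k ∈ F, ‖f (x k)‖ ^ q ≤ C)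
    (c : ℕ → ℂ) (F : Finset ℕ) :
    ‖∑ k ∈ F, c k • x k‖ ≤ C ^ (1 / q) * (∑ k ∈ F, ‖c k‖ ^ p) ^ (1 / p) := by
  obtain ⟨g, hg, hgx⟩ := exists_dual_vector'' ℂ (∑ k ∈ F, c k • x k)
  have hnorm : ‖∑ k ∈ F, c k • x k‖ = ‖g (∑ k ∈ F, c k • x k)‖ := by simp [hgx]
  calc ‖∑ k ∈ F, c k • x k‖
      ≤ ∑ k ∈ F, ‖c k‖ * ‖g (x k)‖ := by
        rw [hnorm, map_sum]
        refine (norm_sum_le _ _).trans_eq (Finset.sum_congr rfl fun k _ => ?_)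
        rw [map_smul, smul_eq_mul, norm_mul]
    _ ≤ (∑ k ∈ F, ‖c k‖ ^ p) ^ (1 / p) * (∑ k ∈ F, ‖g (x k)‖ ^ q) ^ (1 / q) :=
        Real.inner_le_Lp_mul_Lq_of_nonneg F hpq (fun _ _ => norm_nonneg _)
          (fun _ _ => norm_nonneg _)
    _ ≤ (∑ k ∈ F, ‖c k‖ ^ p) ^ (1 / p) * C ^ (1 / q) := by
        gcongr
        · exact hpq.symm.one_div_nonneg
        · exact hC g hg F
    _ = C ^ (1 / q) * (∑ k ∈ F, ‖c k‖ ^ p) ^ (1 / p) := mul_comm _ _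

theorem WeaklyQSummable.exists_norm_sum_smul_le {p p' : ℝ≥0∞} [p.HolderConjugate p']
    (hp : p ≠ ⊤) {x : ℕ → X} (hx : WeaklyQSummable p' x) :
    ∃ K, 0 ≤ K ∧ ∀ (c : ℕ → ℂ) (F : Finset ℕ),
      ‖∑ k ∈ F, c k • x k‖ ≤ K * (∑ k ∈ F, ‖c k‖ ^ p.toReal) ^ (1 / p.toReal) := by
  rcases eq_or_ne p' ⊤ with hp' | hp'
  · obtain ⟨M, hM⟩ := hx.1 hp'
    have hp1 : p = 1 := (ENNReal.HolderConjugate.eq_top_iff_eq_one p' p).mp hp'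
    refine ⟨max M 0, le_max_right _ _, fun c F => ?_⟩
    simpa [hp1] using norm_sum_smul_le_mul_sum_norm (fun k => (hM k).trans (le_max_left M 0)) c F
  · obtain ⟨C, hC⟩ := hx.2 hp'
    have hC0 : 0 ≤ C := by simpa using hC 0 (by simp) ∅
    exact ⟨C ^ (1 / p'.toReal), by positivity, norm_sum_smul_le_of_holderConjugate
      (ENNReal.HolderConjugate.toReal_of_ne_top hp hp') hC⟩

theorem summable_smul_of_norm_sum_smul_le [CompleteSpace X] {p K : ℝ} (hp : 0 < p) (hK : 0 ≤ K)
    {x : ℕ → X}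
    (hx : ∀ (c : ℕ → ℂ) (F : Finset ℕ), ‖∑ k ∈ F, c k • x k‖ ≤ K * (∑ k ∈ F, ‖c k‖ ^ p) ^ (1 / p))
    {c : ℕ → ℂ} (hc : Summable fun k => ‖c k‖ ^ p) : Summable fun k => c k • x k := by
  rw [summable_iff_vanishing_norm]
  intro ε hε
  have hδ : 0 < ε / (K + 1) := by positivity
  obtain ⟨s, hs⟩ := summable_iff_vanishing_norm.mp hc _ (Real.rpow_pos_of_pos hδ p)
  refine ⟨s, fun t ht => ?_⟩
  have htail : ∑ k ∈ t, ‖c k‖ ^ p < (ε / (K + 1)) ^ p :=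
    (Real.le_norm_self _).trans_lt (hs t ht)
  calc ‖∑ k ∈ t, c k • x k‖
      ≤ K * (∑ k ∈ t, ‖c k‖ ^ p) ^ (1 / p) := hx c t
    _ ≤ K * ((ε / (K + 1)) ^ p) ^ (1 / p) := by gcongr
    _ = K * (ε / (K + 1)) := by rw [one_div, Real.rpow_rpow_inv hδ.le hp.ne']
    _ < (K + 1) * (ε / (K + 1)) := by gcongr; linarith
    _ = ε := mul_div_cancel₀ _ (by positivity)

theorem exists_lp_clm_apply_eq_tsum_smul [CompleteSpace X] {p : ℝ≥0∞} [Fact (1 ≤ p)]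
    (hp : p ≠ ⊤) {K : ℝ} (hK : 0 ≤ K) {x : ℕ → X}
    (hx : ∀ (c : ℕ → ℂ) (F : Finset ℕ),
      ‖∑ k ∈ F, c k • x k‖ ≤ K * (∑ k ∈ F, ‖c k‖ ^ p.toReal) ^ (1 / p.toReal)) :
    ∃ B : lp (fun _ : ℕ => ℂ) p →L[ℂ] X, ∀ c, B c = ∑' k, c k • x k := by
  have hp0 : 0 < p.toReal := ENNReal.toReal_pos (zero_lt_one.trans_le Fact.out).ne' hp
  have hsum (c : lp (fun _ : ℕ => ℂ) p) : Summable fun k => c k • x k :=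
    summable_smul_of_norm_sum_smul_le hp0 hK hx ((lp.memℓp c).summable hp0)
  let B : lp (fun _ : ℕ => ℂ) p →ₗ[ℂ] X :=
    { toFun := fun c => ∑' k, c k • x k
      map_add' := fun c d => by
        simp only [lp.coeFn_add, Pi.add_apply, add_smul]
        exact (hsum c).tsum_add (hsum d)
      map_smul' := fun a c => by
        simp only [lp.coeFn_smul, Pi.smul_apply, smul_eq_mul, mul_smul, RingHom.id_apply]
        exact (hsum c).tsum_const_smul a }
  have hB (c : lp (fun _ : ℕ => ℂ) p) : ‖B c‖ ≤ K * ‖c‖ := by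
    refine le_of_tendsto ((hsum c).hasSum.norm) (Eventually.of_forall fun F => ?_)
    calc ‖∑ k ∈ F, c k • x k‖
        ≤ K * (∑ k ∈ F, ‖c k‖ ^ p.toReal) ^ (1 / p.toReal) := hx c F
      _ ≤ K * (‖c‖ ^ p.toReal) ^ (1 / p.toReal) := by
        gcongr
        exact lp.sum_rpow_le_norm_rpow hp0 c F
      _ = K * ‖c‖ := by rw [one_div, Real.rpow_rpow_inv (norm_nonneg _) hp0.ne']
  exact ⟨B.mkContinuous K hB, fun c => rfl⟩

theorem exists_lp_clm_apply_eq_mul {p : ℝ≥0∞} [Fact (1 ≤ p)] (lam : lp (fun _ : ℕ => ℂ) p)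
    {x' : ℕ → X →L[ℂ] ℂ} {M : ℝ} (hM : ∀ k, ‖x' k‖ ≤ M) :
    ∃ A : X →L[ℂ] lp (fun _ : ℕ => ℂ) p, ∀ v k, A v k = lam k * x' k v := by
  have hp : p ≠ 0 := (zero_lt_one.trans_le Fact.out).ne'
  have hle (v : X) (k : ℕ) : ‖lam k * x' k v‖ ≤ ‖(M * ‖v‖) • lam k‖ := by
    rw [norm_mul, norm_smul, Real.norm_eq_abs, mul_comm]
    gcongr
    exact ((x' k).le_opNorm v).trans ((mul_le_mul_of_nonneg_right (hM k) (norm_nonneg v)).trans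
      (le_abs_self _))
  let A : X →ₗ[ℂ] lp (fun _ : ℕ => ℂ) p :=
    { toFun := fun v => ⟨fun k => lam k * x' k v, ((lp.memℓp ((M * ‖v‖) • lam)).mono' (hle v))⟩
      map_add' := fun u v => lp.ext <| funext fun k => by simp only [map_add]; exact mul_add _ _ _
      map_smul' := fun a v => lp.ext <| funext fun k => by simp [mul_left_comm] }
  have hA (v : X) : ‖A v‖ ≤ ‖lam‖ * |M| * ‖v‖ :=
    calc ‖A v‖ ≤ ‖(M * ‖v‖) • lam‖ := lp.norm_mono hp (hle v)
      _ = ‖lam‖ * |M| * ‖v‖ := by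
        rw [lp.norm_const_smul hp, Real.norm_eq_abs, abs_mul, abs_norm]
        ring
  exact ⟨A.mkContinuous _ hA, fun v k => rfl⟩

theorem isRNuclear_of_apply_eq_mul {r : ℝ} {p : ℝ≥0∞} [Fact (1 ≤ p)] (hp : p ≠ ⊤)
    {A : X →L[ℂ] lp (fun _ : ℕ => ℂ) p} {κ : ℕ → ℂ} {y' : ℕ → X →L[ℂ] ℂ}
    (hκ : Summable fun k => ‖κ k‖ ^ r) (hy' : ∃ M, ∀ k, ‖y' k‖ ≤ M)
    (hA : ∀ v k, A v k = κ k * y' k v) : IsRNuclear r A := by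
  refine ⟨κ, y', fun k => lp.single p k 1, hκ, hy', ⟨1, fun k => ?_⟩, fun v => ?_⟩
  · simp [lp.norm_single (zero_lt_one.trans_le Fact.out)]
  · rw [← (lp.hasSum_single hp (A v)).tsum_eq]
    refine tsum_congr fun k => ?_
    rw [← lp.single_smul, smul_eq_mul, mul_one, hA]

end

theorem factorization_N_r_pdual_general (r p : ℝ) (p' : ℝ≥0∞)
    (hr0 : 0 < r) (hr1 : r ≤ 1) (hp1 : 1 ≤ p)
    (hp' : 1 / ENNReal.ofReal p + 1 / p' = 1)
    (X : Type*) [NormedAddCommGroup X] [NormedSpace ℂ X] [CompleteSpace X]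
    (T : X →L[ℂ] X) (lam : ℕ → ℂ) (x' : ℕ → X →L[ℂ] ℂ) (x : ℕ → X)
    (hlam : Summable (fun k => ‖lam k‖ ^ r))
    (hx' : ∃ M, ∀ k, ‖x' k‖ ≤ M)
    (hx : WeaklyQSummable p' x)
    (hT : ∀ y : X, T y = ∑' k, (lam k * (x' k) y) • x k) :
    haveI : Fact (1 ≤ ENNReal.ofReal p) := ⟨ENNReal.one_le_ofReal.mpr hp1⟩
    ∃ (A : X →L[ℂ] lp (fun _ : ℕ => ℂ) (ENNReal.ofReal p))
      (B : lp (fun _ : ℕ => ℂ) (ENNReal.ofReal p) →L[ℂ] X),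
      IsRNuclear r A ∧ T = B.comp A := by
  have : Fact (1 ≤ ENNReal.ofReal p) := ⟨ENNReal.one_le_ofReal.mpr hp1⟩
  have : (ENNReal.ofReal p).HolderConjugate p' :=
    ENNReal.holderConjugate_iff.mpr (by simpa only [one_div] using hp')
  have hp_ne_top : ENNReal.ofReal p ≠ ⊤ := ENNReal.ofReal_ne_top
  have hlam_r : Memℓp lam (ENNReal.ofReal r) :=
    memℓp_gen (by rwa [ENNReal.toReal_ofReal hr0.le])
  have hlam_p : Memℓp lam (ENNReal.ofReal p) :=
    hlam_r.of_exponent_ge (ENNReal.ofReal_le_ofReal (hr1.trans hp1))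
  obtain ⟨M, hM⟩ := hx'
  obtain ⟨A, hA⟩ := exists_lp_clm_apply_eq_mul ⟨lam, hlam_p⟩ hM
  obtain ⟨K, hK0, hK⟩ := hx.exists_norm_sum_smul_le hp_ne_top
  obtain ⟨B, hB⟩ := exists_lp_clm_apply_eq_tsum_smul hp_ne_top hK0 hK
  refine ⟨A, B, isRNuclear_of_apply_eq_mul hp_ne_top hlam ⟨M, hM⟩ hA, ?_⟩
  ext v
  simp only [ContinuousLinearMap.comp_apply, hT, hB, hA]

/-- for `0 < r ≤ 1`, `1 ≤ p ≤ 2` with `1/r = 1/2 + 1/p` and `p'`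
conjugate to `p`, every operator `T ∈ N_{[r,p']}(X)`, i.e.
`T x = ∑ λ_k x'_k(x) x_k` with `∑|λ_k|^r < ∞`, `(x'_k)` bounded and `(x_k)` weakly
`p'`-summable, factors as `T = B ∘ A` with `A : X → l_p` `r`-nuclear and
`B : l_p → X` bounded. -/
theorem factorization_N_r_pdual (r p : ℝ) (p' : ℝ≥0∞)
    (hr0 : 0 < r) (hr1 : r ≤ 1) (hp1 : 1 ≤ p) (hp2 : p ≤ 2)
    (hrp : 1 / r = 1 / 2 + 1 / p)
    (hp' : 1 / ENNReal.ofReal p + 1 / p' = 1)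
    (X : Type*) [NormedAddCommGroup X] [NormedSpace ℂ X] [CompleteSpace X]
    (T : X →L[ℂ] X) (lam : ℕ → ℂ) (x' : ℕ → X →L[ℂ] ℂ) (x : ℕ → X)
    (hlam : Summable (fun k => ‖lam k‖ ^ r))
    (hx' : ∃ M, ∀ k, ‖x' k‖ ≤ M)
    (hx : WeaklyQSummable p' x)
    (hT : ∀ y : X, T y = ∑' k, (lam k * (x' k) y) • x k) :
    haveI : Fact (1 ≤ ENNReal.ofReal p) := ⟨ENNReal.one_le_ofReal.mpr hp1⟩
    ∃ (A : X →L[ℂ] lp (fun _ : ℕ => ℂ) (ENNReal.ofReal p))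
      (B : lp (fun _ : ℕ => ℂ) (ENNReal.ofReal p) →L[ℂ] X),
      IsRNuclear r A ∧ T = B.comp A :=
  factorization_N_r_pdual_general r p p' hr0 hr1 hp1 hp' X T lam x' x hlam hx' hx hT
end

section
/- Let X, Y be Banach spaces and let (Z_k)_{k∈ℕ} be a countable family of Banach spaces. Suppose for each k there are bounded operators A_k : X → Z_k with ‖A_k‖ ≤ 1 and B_k : Z_k → Y, with Σ_k ‖B_k‖ < ∞, and set T_k := B_k ∘ A_k. Then the series Σ_k T_k converges absolutely in the operator norm of L(X,Y), and its sum T factors through the l_∞-direct sum Z := {(z_k) : z_k ∈ Z_k, sup_k ‖z_k‖ < ∞} (with norm ‖(z_k)‖ = sup_k ‖z_k‖): there exist bounded linear operators A : X → Z with ‖A‖ ≤ 1 (namely A x = (A_k x)_k) and B : Z → Y with ‖B‖ ≤ Σ_k ‖B_k‖ such that T = B ∘ A. -/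
/-! The map `x ↦ (A_k x)_k` lands in `ℓ^∞` with norm at most `sup_k ‖A_k‖ ≤ 1`. Since every
coordinate evaluation on `ℓ^∞` has norm at most `1`, the operators `B_k ∘ eval_k` are absolutely
summable, so `B := ∑ B_k ∘ eval_k` exists with `‖B‖ ≤ ∑ ‖B_k‖`; composition with `A` is continuous,
so `B ∘ A = ∑ B_k ∘ eval_k ∘ A = ∑ B_k ∘ A_k`. -/

open scoped ENNReal

namespace lp

variable {𝕜 ι : Type*} [NontriviallyNormedField 𝕜] {E : ι → Type*}
  [∀ i, NormedAddCommGroup (E i)] [∀ i, NormedSpace 𝕜 (E i)]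

theorem norm_evalCLM_le (p : ℝ≥0∞) [Fact (1 ≤ p)] (i : ι) : ‖evalCLM 𝕜 E p i‖ ≤ 1 :=
  LinearMap.mkContinuous_norm_le _ zero_le_one _

variable {X Y : Type*} [NormedAddCommGroup X] [NormedSpace 𝕜 X] [NormedAddCommGroup Y]
  [NormedSpace 𝕜 Y]

theorem memℓp_infty_apply_of_bddAbove {A : ∀ i, X →L[𝕜] E i}
    (hA : BddAbove (Set.range fun i => ‖A i‖)) (x : X) : Memℓp (fun i => A i x) ∞ := by
  obtain ⟨C, hC⟩ := hA
  refine memℓp_infty ⟨C * ‖x‖, ?_⟩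
  rintro - ⟨i, rfl⟩
  exact (A i).le_of_opNorm_le (hC ⟨i, rfl⟩) x

noncomputable def piCLM (A : ∀ i, X →L[𝕜] E i) (hA : BddAbove (Set.range fun i => ‖A i‖)) :
    X →L[𝕜] lp E ∞ :=
  LinearMap.mkContinuousOfExistsBound
    { toFun := fun x => ⟨fun i => A i x, memℓp_infty_apply_of_bddAbove hA x⟩
      map_add' := fun x y => by ext i; exact map_add (A i) x y
      map_smul' := fun c x => by ext i; exact map_smul (A i) c x }
    (by
      obtain ⟨C, hC⟩ := hA
      refine ⟨max C 0, fun x => norm_le_of_forall_le (by positivity) fun i => ?_⟩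
      exact (A i).le_of_opNorm_le ((hC ⟨i, rfl⟩).trans (le_max_left _ _)) x)

variable {A : ∀ i, X →L[𝕜] E i} (hA : BddAbove (Set.range fun i => ‖A i‖))

@[simp]
theorem piCLM_apply (x : X) (i : ι) : (piCLM A hA x : ∀ i, E i) i = A i x :=
  rfl

theorem evalCLM_comp_piCLM (i : ι) : (evalCLM 𝕜 E ∞ i).comp (piCLM A hA) = A i :=
  rfl

theorem norm_piCLM_le {C : ℝ} (hC : 0 ≤ C) (hAC : ∀ i, ‖A i‖ ≤ C) : ‖piCLM A hA‖ ≤ C :=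
  (piCLM A hA).opNorm_le_bound hC fun x =>
    norm_le_of_forall_le (by positivity) fun i => (A i).le_of_opNorm_le (hAC i) x

variable {B : ∀ i, E i →L[𝕜] Y}

theorem norm_comp_evalCLM_le (i : ι) : ‖(B i).comp (evalCLM 𝕜 E ∞ i)‖ ≤ ‖B i‖ :=
  ((B i).opNorm_comp_le _).trans (mul_le_of_le_one_right (norm_nonneg _) (norm_evalCLM_le _ i))

theorem summable_norm_comp_evalCLM (hB : Summable fun i => ‖B i‖) :
    Summable fun i => ‖(B i).comp (evalCLM 𝕜 E ∞ i)‖ :=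
  hB.of_nonneg_of_le (fun _ => norm_nonneg _) norm_comp_evalCLM_le

theorem norm_tsum_comp_evalCLM_le (hB : Summable fun i => ‖B i‖) :
    ‖∑' i, (B i).comp (evalCLM 𝕜 E ∞ i)‖ ≤ ∑' i, ‖B i‖ :=
  (norm_tsum_le_tsum_norm (E := lp E ∞ →L[𝕜] Y) (summable_norm_comp_evalCLM hB)).trans <|
    (summable_norm_comp_evalCLM hB).tsum_le_tsum norm_comp_evalCLM_le hB

theorem hasSum_comp_piCLM [CompleteSpace Y] (hB : Summable fun i => ‖B i‖) :
    HasSum (fun i => (B i).comp (A i))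
      ((∑' i, (B i).comp (evalCLM 𝕜 E ∞ i)).comp (piCLM A hA)) := by
  have hsum := (summable_norm_comp_evalCLM hB).of_norm.hasSum
  simpa only [ContinuousLinearMap.flip_apply, ContinuousLinearMap.compL_apply,
    ContinuousLinearMap.comp_assoc, evalCLM_comp_piCLM] using
    hsum.mapL ((ContinuousLinearMap.compL 𝕜 X (lp E ∞) Y).flip (piCLM A hA))

end lp

theorem series_factors_through_linfty_sum_general
    (X Y : Type*)
    [NormedAddCommGroup X] [NormedSpace ℂ X]
    [NormedAddCommGroup Y] [NormedSpace ℂ Y] [CompleteSpace Y]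
    (Z : ℕ → Type*) [∀ k, NormedAddCommGroup (Z k)] [∀ k, NormedSpace ℂ (Z k)]
    (A : ∀ k, X →L[ℂ] Z k) (hA : ∀ k, ‖A k‖ ≤ 1)
    (B : ∀ k, Z k →L[ℂ] Y) (hB : Summable fun k => ‖B k‖) :
    Summable (fun k => ‖(B k).comp (A k)‖) ∧
    ∃ T : X →L[ℂ] Y, HasSum (fun k => (B k).comp (A k)) T ∧
      ∃ (A' : X →L[ℂ] lp Z ∞) (B' : lp Z ∞ →L[ℂ] Y),
        ‖A'‖ ≤ 1 ∧ ‖B'‖ ≤ ∑' k, ‖B k‖ ∧ T = B'.comp A' ∧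
        ∀ (v : X) (k : ℕ), (A' v : ∀ k, Z k) k = A k v := by
  have hAbdd : BddAbove (Set.range fun k => ‖A k‖) := ⟨1, Set.forall_mem_range.2 hA⟩
  have hnorm : ∀ k, ‖(B k).comp (A k)‖ ≤ ‖B k‖ := fun k =>
    ((B k).opNorm_comp_le _).trans (mul_le_of_le_one_right (norm_nonneg _) (hA k))
  exact ⟨hB.of_nonneg_of_le (fun _ => norm_nonneg _) hnorm, _, lp.hasSum_comp_piCLM hAbdd hB,
    lp.piCLM A hAbdd, _, lp.norm_piCLM_le hAbdd zero_le_one hA,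
    lp.norm_tsum_comp_evalCLM_le hB, rfl, lp.piCLM_apply hAbdd⟩

/-- if `A_k : X → Z_k` with `‖A_k‖ ≤ 1` and `B_k : Z_k → Y` with
`∑_k ‖B_k‖ < ∞`, then `∑_k B_k ∘ A_k` converges absolutely in operator norm and
its sum `T` factors through the `l_∞`-direct sum `lp Z ∞` of the `Z_k`, via
`A x = (A_k x)_k` with `‖A‖ ≤ 1` and some `B` with `‖B‖ ≤ ∑_k ‖B_k‖`. -/
theorem series_factors_through_linfty_sum
    (X Y : Type*)
    [NormedAddCommGroup X] [NormedSpace ℂ X] [CompleteSpace X]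
    [NormedAddCommGroup Y] [NormedSpace ℂ Y] [CompleteSpace Y]
    (Z : ℕ → Type*) [∀ k, NormedAddCommGroup (Z k)] [∀ k, NormedSpace ℂ (Z k)]
    [∀ k, CompleteSpace (Z k)]
    (A : ∀ k, X →L[ℂ] Z k) (hA : ∀ k, ‖A k‖ ≤ 1)
    (B : ∀ k, Z k →L[ℂ] Y) (hB : Summable fun k => ‖B k‖) :
    Summable (fun k => ‖(B k).comp (A k)‖) ∧
    ∃ T : X →L[ℂ] Y, HasSum (fun k => (B k).comp (A k)) T ∧
      ∃ (A' : X →L[ℂ] lp Z ∞) (B' : lp Z ∞ →L[ℂ] Y),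
        ‖A'‖ ≤ 1 ∧ ‖B'‖ ≤ ∑' k, ‖B k‖ ∧ T = B'.comp A' ∧
        ∀ (v : X) (k : ℕ), (A' v : ∀ k, Z k) k = A k v :=
  series_factors_through_linfty_sum_general X Y Z A hA B hB
end
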